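/- Distinct safe blocks whose institutions are all saturated by a given matching must be disjoint: if every institution of the bipartite graph can be simultaneously matched, then any two distinct safe blocks are disjoint. -/
import Mathlib


open scoped Classical

variable {N D : Type*} [Fintype N] [Fintype D] [DecidableEq N] [DecidableEq D]

/-- Neighborhood of a set of institutions: agents adjacent to some institution in `T`. -/
noncomputable def nbr (adj : D → N → Prop) (T : Finset D) : Finset N :=
  Finset.univ.filter fun a => ∃ d ∈ T, adj d a

/-- `T` is equal-acceptable: exactly as many neighbors as institutions. -/
def equalAcc (adj : D → N → Prop) (T : Finset D) : Prop :=
  (nbr adj T).card = T.card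

/-- A safe block: a nonempty equal-acceptable set with no nonempty proper
equal-acceptable subset. -/
def safeBlock (adj : D → N → Prop) (S : Finset D) : Prop :=
  S.Nonempty ∧ equalAcc adj S ∧ ∀ S' ⊂ S, S'.Nonempty → ¬ equalAcc adj S'

/-- `M` is a matching of the bipartite graph restricted to institutions `Dbar`. -/
def isMatching (adj : D → N → Prop) (Dbar : Finset D) (M : Finset (D × N)) : Prop :=
  (∀ p ∈ M, p.1 ∈ Dbar ∧ adj p.1 p.2) ∧
  (∀ p ∈ M, ∀ q ∈ M, p.1 = q.1 → p = q) ∧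
  (∀ p ∈ M, ∀ q ∈ M, p.2 = q.2 → p = q)


lemma nbr_mono (adj : D → N → Prop) {T T' : Finset D} (h : T ⊆ T') :
    nbr adj T ⊆ nbr adj T' := by
  intro a ha
  simp only [nbr, Finset.mem_filter] at *
  obtain ⟨_, d, hd, hadj⟩ := ha
  exact ⟨Finset.mem_univ a, d, h hd, hadj⟩

lemma nbr_union (adj : D → N → Prop) (T T' : Finset D) :
    nbr adj (T ∪ T') = nbr adj T ∪ nbr adj T' := by
  ext a
  simp only [nbr, Finset.mem_filter, Finset.mem_union, Finset.mem_univ, true_and]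
  constructor
  · rintro ⟨d, hd | hd, hadj⟩
    · exact Or.inl ⟨d, hd, hadj⟩
    · exact Or.inr ⟨d, hd, hadj⟩
  · rintro (⟨d, hd, hadj⟩ | ⟨d, hd, hadj⟩)
    · exact ⟨d, Or.inl hd, hadj⟩
    · exact ⟨d, Or.inr hd, hadj⟩

/-- If every institution can be simultaneously matched, then any two distinct safe blocks
are disjoint. -/
theorem safe_blocks_disjoint (adj : D → N → Prop)
    (h : ∃ M : Finset (D × N), isMatching adj Finset.univ M ∧ ∀ d : D, ∃ a, (d, a) ∈ M)
    (S₁ S₂ : Finset D) (h1 : safeBlock adj S₁) (h2 : safeBlock adj S₂) (hne : S₁ ≠ S₂) :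
    Disjoint S₁ S₂ := by
  obtain ⟨M, hM, hsat⟩ := h
  -- Hall condition
  have hall : ∀ T : Finset D, T.card ≤ (nbr adj T).card := by
    intro T
    have : ∀ d ∈ T, (hsat d).choose ∈ nbr adj T := by
      intro d hd
      have hm := (hsat d).choose_spec
      have := (hM.1 _ hm).2
      simp only [nbr, Finset.mem_filter, Finset.mem_univ, true_and]
      exact ⟨d, hd, this⟩
    apply Finset.card_le_card_of_injOn (fun d => (hsat d).choose) this
    intro d hd d' hd' heq
    have hm := (hsat d).choose_spec
    have hm' := (hsat d').choose_spec
    have := hM.2.2 _ hm _ hm' heq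
    exact congrArg Prod.fst this
  by_contra hdisj
  rw [Finset.not_disjoint_iff_nonempty_inter] at hdisj
  -- key: S₁ ∩ S₂ is equal-acceptable
  have hsub : nbr adj (S₁ ∩ S₂) ⊆ nbr adj S₁ ∩ nbr adj S₂ :=
    Finset.subset_inter (nbr_mono adj Finset.inter_subset_left)
      (nbr_mono adj Finset.inter_subset_right)
  have hcard1 : (nbr adj (S₁ ∩ S₂)).card ≤ (nbr adj S₁ ∩ nbr adj S₂).card :=
    Finset.card_le_card hsub
  have hu : (nbr adj S₁ ∪ nbr adj S₂).card = (nbr adj (S₁ ∪ S₂)).card := by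
    rw [nbr_union]
  have hiu : (nbr adj S₁ ∩ nbr adj S₂).card + (nbr adj S₁ ∪ nbr adj S₂).card
      = (nbr adj S₁).card + (nbr adj S₂).card := by
    rw [add_comm]
    exact Finset.card_union_add_card_inter _ _
  have hSiu : (S₁ ∩ S₂).card + (S₁ ∪ S₂).card = S₁.card + S₂.card := by
    rw [add_comm]
    exact Finset.card_union_add_card_inter _ _
  have e1 : (nbr adj S₁).card = S₁.card := h1.2.1
  have e2 : (nbr adj S₂).card = S₂.card := h2.2.1
  have hallU := hall (S₁ ∪ S₂)
  have hallI := hall (S₁ ∩ S₂)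
  have hEq : equalAcc adj (S₁ ∩ S₂) := by
    unfold equalAcc
    omega
  -- Now derive contradiction from minimality
  by_cases hss : S₁ ⊆ S₂
  · have : S₁ ⊂ S₂ := Finset.ssubset_iff_subset_ne.mpr ⟨hss, hne⟩
    exact h2.2.2 S₁ this h1.1 h1.2.1
  · have hssub : S₁ ∩ S₂ ⊂ S₁ := by
      refine Finset.ssubset_iff_subset_ne.mpr ⟨Finset.inter_subset_left, ?_⟩
      intro heq
      exact hss (by rw [← heq] at hss ⊢; exact Finset.inter_subset_right)
    exact h1.2.2 _ hssub hdisj hEq
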